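/- Let Ψ be a strong homotopy action of a group G on a topological space X, S ⊆ G a finite symmetric subset with e ∈ S, and α ≥ 0, with M^α, i^α, p, H^α as defined. Then for all f ∈ M^α and t, t' ∈ [0,1]: H^α(f, t) ∈ M^α; H^α(f, 1) = f; H^α(H^α(f, t'), t) = H^α(f, t·t'); H^α(f, 0) = p(i^α(f)), and p(x) ∈ M^α for every x ∈ X; and i^α(H^α(f, t)) = i^α(f). In particular, H^α is a homotopy between p ∘ i^α and the identity of M^α through maps that do not change the value of i^α. -/

import Mathlib

open unitInterval ENNReal

/-- A strong homotopy action of a group `G` on a topological space `X`.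
The argument `(g_j, t_j, g_{j-1}, …, g_1, t_1, g_0, x)` is encoded as the list
`[(g_j,t_j),…,(g_1,t_1)]`, the final group element `g_0` and the point `x`.
Continuity (with `G` discrete) is encoded summand-wise: for every length `n` and
every fixed tuple of group elements, the map is jointly continuous in the
parameters `t_i ∈ [0,1]` and in `x`. -/
structure StrongHomotopyAction (G X : Type*) [Group G] [TopologicalSpace X] where
  toFun : List (G × unitInterval) → G → X → X
  continuous' : ∀ (n : ℕ) (gs : Fin n → G) (g₀ : G),
    Continuous fun p : (Fin n → unitInterval) × X =>
      toFun (List.ofFn fun i => (gs i, p.1 i)) g₀ p.2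
  act_zero : ∀ (L₁ L₂ : List (G × unitInterval)) (g g₀ : G) (x : X),
    toFun (L₁ ++ (g, (0 : unitInterval)) :: L₂) g₀ x = toFun L₁ g (toFun L₂ g₀ x)
  act_one_mid : ∀ (L₁ L₂ : List (G × unitInterval)) (g g' : G) (t : unitInterval)
      (g₀ : G) (x : X),
    toFun (L₁ ++ (g, (1 : unitInterval)) :: (g', t) :: L₂) g₀ x
      = toFun (L₁ ++ (g * g', t) :: L₂) g₀ x
  act_one_last : ∀ (L : List (G × unitInterval)) (g g₀ : G) (x : X),
    toFun (L ++ [(g, (1 : unitInterval))]) g₀ x = toFun L (g * g₀) x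
  id_head : ∀ (t : unitInterval) (L : List (G × unitInterval)) (g₀ : G) (x : X),
    toFun (((1 : G), t) :: L) g₀ x = toFun L g₀ x
  id_mid : ∀ (L₁ L₂ : List (G × unitInterval)) (g : G) (t t' : unitInterval)
      (g₀ : G) (x : X),
    toFun (L₁ ++ (g, t) :: ((1 : G), t') :: L₂) g₀ x = toFun (L₁ ++ (g, t * t') :: L₂) g₀ x
  id_last : ∀ (L : List (G × unitInterval)) (g : G) (t : unitInterval) (x : X),
    toFun (L ++ [(g, t)]) (1 : G) x = toFun L g x
  id_base : ∀ x : X, toFun [] (1 : G) x = x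

variable {G X : Type*} [Group G] [TopologicalSpace X]

/-- `c_g(f) := (w ↦ f(w, 1, g))`: the element `w = (L, h)` is extended by the time `1`
and the group element `g`. -/
def cMap (g : G) (f : List (G × unitInterval) → G → X) :
    List (G × unitInterval) → G → X :=
  fun L h => f (L ++ [(h, (1 : unitInterval))]) g

/-- `H(f, t) := (w ↦ f(w, t, e))`. -/
def Hmap (f : List (G × unitInterval) → G → X) (t : unitInterval) :
    List (G × unitInterval) → G → X :=
  fun L h => f (L ++ [(h, t)]) (1 : G)

/-- `p(x) := (w ↦ Ψ(w, x))`. -/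
def pMap (Ψ : StrongHomotopyAction G X) (x : X) : List (G × unitInterval) → G → X :=
  fun L h => Ψ.toFun L h x

/-- The set `M` of maps `∐_j ((G × [0,1])^j × G) → X` of the form
`w ↦ Ψ(w, t_α, g_{α-1}, …, t_1, g_0, x)` for some `α ≥ 0`, `t_i ∈ [0,1]`, `g_i ∈ G`
and `x ∈ X` (for `α = 0` this is `w ↦ Ψ(w, x)`, i.e. `p(x)`). -/
def Mset (Ψ : StrongHomotopyAction G X) : Set (List (G × unitInterval) → G → X) :=
  { f | (∃ x : X, f = pMap Ψ x) ∨
        ∃ (t : unitInterval) (L' : List (G × unitInterval)) (g₀ : G) (x : X),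
          f = fun L h => Ψ.toFun (L ++ (h, t) :: L') g₀ x }

/-- `S^α := { s_1 ⋯ s_α | s_i ∈ S }`. -/
def SPow {G : Type*} [Group G] (S : Set G) (α : ℕ) : Set G :=
  { g | ∃ l : List G, l.length = α ∧ (∀ s ∈ l, s ∈ S) ∧ l.prod = g }

/-- The set `M^α` of maps `w ↦ Ψ(w, t_α, g_{α-1}, …, t_1, g_0, x)` with
`t_i ∈ [0,1]`, `g_i ∈ S^α` and `x ∈ X` (for `α = 0` this is `w ↦ Ψ(w, x)`). -/
def Malpha {G X : Type*} [Group G] [TopologicalSpace X]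
    (Ψ : StrongHomotopyAction G X) (S : Set G) :
    ℕ → Set (List (G × unitInterval) → G → X)
  | 0 => { f | ∃ x : X, f = pMap Ψ x }
  | α + 1 => { f | ∃ (t : unitInterval) (L' : List (G × unitInterval)) (g₀ : G) (x : X),
      L'.length = α ∧ (∀ q ∈ L', q.1 ∈ SPow S (α + 1)) ∧ g₀ ∈ SPow S (α + 1) ∧
      f = fun L h => Ψ.toFun (L ++ (h, t) :: L') g₀ x }

/-!
The deformation only ever touches the slot `(h, t)` where the argument `w` meets the data of
`f`: inserting a pair `(e, s)` behind it multiplies its time by `s` (axiom (4)), so `H^α(·, s)`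
rescales the first time coordinate of `f`, which gives membership, `H(f, 1) = f` and the
composition law. At time `0`, axiom (1) splits `f` as `p` of its value at `e`. The maps `p(x)`
are fixed by every `H(·, s)` by axiom (5), and lie in `M^α` because `Ψ(w, x)` can be padded with
`α` slots `(e, 1)`, and `e ∈ S^α` since `e ∈ S`.
-/

def tailMap (Ψ : StrongHomotopyAction G X) (t : unitInterval) (L' : List (G × unitInterval))
    (g₀ : G) (x : X) : List (G × unitInterval) → G → X :=
  fun L h => Ψ.toFun (L ++ (h, t) :: L') g₀ x

section

variable (Ψ : StrongHomotopyAction G X)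

theorem mem_Malpha_succ_iff {S : Set G} {n : ℕ} {f : List (G × unitInterval) → G → X} :
    f ∈ Malpha Ψ S (n + 1) ↔ ∃ (t : unitInterval) (L' : List (G × unitInterval)) (g₀ : G)
      (x : X), L'.length = n ∧ (∀ q ∈ L', q.1 ∈ SPow S (n + 1)) ∧ g₀ ∈ SPow S (n + 1) ∧
        f = tailMap Ψ t L' g₀ x :=
  Iff.rfl

theorem Hmap_tailMap (t s : unitInterval) (L' : List (G × unitInterval)) (g₀ : G) (x : X) :
    Hmap (tailMap Ψ t L' g₀ x) s = tailMap Ψ (s * t) L' g₀ x := by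
  funext L h
  simpa [Hmap, tailMap] using Ψ.id_mid L L' h s t g₀ x

theorem tailMap_nil_one (t : unitInterval) (L' : List (G × unitInterval)) (g₀ : G) (x : X) :
    tailMap Ψ t L' g₀ x [] 1 = Ψ.toFun L' g₀ x :=
  Ψ.id_head t L' g₀ x

theorem tailMap_zero (L' : List (G × unitInterval)) (g₀ : G) (x : X) :
    tailMap Ψ 0 L' g₀ x = pMap Ψ (Ψ.toFun L' g₀ x) := by
  funext L h
  exact Ψ.act_zero L L' h g₀ x

theorem Hmap_pMap (s : unitInterval) (x : X) : Hmap (pMap Ψ x) s = pMap Ψ x := by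
  funext L h
  exact Ψ.id_last L h s x

theorem pMap_nil_one (x : X) : pMap Ψ x [] 1 = x :=
  Ψ.id_base x

theorem pMap_eq_tailMap_replicate (n : ℕ) (x : X) :
    pMap Ψ x = tailMap Ψ 1 (List.replicate n (1, 1)) 1 x := by
  funext L h
  induction n with
  | zero => exact (Ψ.id_last L h 1 x).symm
  | succ n ih => rw [ih]; simp [tailMap, List.replicate_succ, Ψ.id_mid]

end

theorem one_mem_SPow {S : Set G} (hS : (1 : G) ∈ S) (n : ℕ) : (1 : G) ∈ SPow S n :=
  ⟨List.replicate n 1, List.length_replicate, fun _ hs => List.eq_of_mem_replicate hs ▸ hS,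
    by simp⟩

theorem pMap_mem_Malpha (Ψ : StrongHomotopyAction G X) {S : Set G} (hS : (1 : G) ∈ S) (x : X) :
    ∀ α, pMap Ψ x ∈ Malpha Ψ S α
  | 0 => ⟨x, rfl⟩
  | n + 1 => (mem_Malpha_succ_iff Ψ).2 ⟨1, List.replicate n (1, 1), 1, x,
      List.length_replicate, fun _ hq => List.eq_of_mem_replicate hq ▸ one_mem_SPow hS _,
      one_mem_SPow hS _, pMap_eq_tailMap_replicate Ψ n x⟩

theorem Malpha_deformation_general {G X : Type*} [Group G] [TopologicalSpace X]
    (Ψ : StrongHomotopyAction G X) (S : Set G) (hSone : (1 : G) ∈ S) (α : ℕ) :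
    (∀ f ∈ Malpha Ψ S α, ∀ t t' : unitInterval,
      Hmap f t ∈ Malpha Ψ S α ∧
      Hmap f 1 = f ∧
      Hmap (Hmap f t') t = Hmap f (t * t') ∧
      Hmap f 0 = pMap Ψ (f [] (1 : G)) ∧
      Hmap f t [] (1 : G) = f [] (1 : G)) ∧
    (∀ x : X, pMap Ψ x ∈ Malpha Ψ S α) := by
  refine ⟨fun f hf t t' => ?_, fun x => pMap_mem_Malpha Ψ hSone x α⟩
  cases α with
  | zero =>
    obtain ⟨x, rfl⟩ := hf
    simp only [Hmap_pMap, pMap_nil_one, and_true]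
    exact ⟨x, rfl⟩
  | succ n =>
    obtain ⟨u, L', g₀, x, hlen, hq, hg₀, rfl⟩ := (mem_Malpha_succ_iff Ψ).1 hf
    simp only [Hmap_tailMap, one_mul, zero_mul, mul_assoc, tailMap_zero, tailMap_nil_one,
      and_true]
    exact (mem_Malpha_succ_iff Ψ).2 ⟨t * u, L', g₀, x, hlen, hq, hg₀, rfl⟩

/-- `H^α` is a homotopy between `p ∘ i^α` and the identity of `M^α` through maps
that do not change the value of `i^α` (where `i^α(f) := f(e)`): for `f ∈ M^α` and
`t, t' ∈ [0,1]` we have `H^α(f,t) ∈ M^α`, `H^α(f,1) = f`,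
`H^α(H^α(f,t'),t) = H^α(f, t·t')`, `H^α(f,0) = p(i^α(f))`, `p(x) ∈ M^α` for all `x`,
and `i^α(H^α(f,t)) = i^α(f)`. -/
theorem Malpha_deformation {G X : Type*} [Group G] [TopologicalSpace X]
    (Ψ : StrongHomotopyAction G X) (S : Set G) (hSfin : S.Finite)
    (hSsymm : ∀ s ∈ S, s⁻¹ ∈ S) (hSone : (1 : G) ∈ S) (α : ℕ) :
    (∀ f ∈ Malpha Ψ S α, ∀ t t' : unitInterval,
      Hmap f t ∈ Malpha Ψ S α ∧
      Hmap f 1 = f ∧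
      Hmap (Hmap f t') t = Hmap f (t * t') ∧
      Hmap f 0 = pMap Ψ (f [] (1 : G)) ∧
      Hmap f t [] (1 : G) = f [] (1 : G)) ∧
    (∀ x : X, pMap Ψ x ∈ Malpha Ψ S α) :=
  Malpha_deformation_general Ψ S hSone α
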